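/- Let G be a symmetric invertible 4×4 real matrix of Lorentzian signature (there exists an invertible S with SᵀGS = diag(-1,1,1,1)) with (G⁻¹)₀₀ < 0, let u ∈ ℝ⁴ satisfy uᵀGu = -1 and u⁰ > 0 (u⁰ the 0-th component of u), and let κ, σ ∈ ℝ with κ ≠ 0 and σ² < 1. Define P = G + (Gu)(Gu)ᵀ, Γ = G + 2(Gu)(Gu)ᵀ, e₀ = (1,0,0,0), and let A⁰ be the symmetric 5×5 real matrix with A⁰₀₀ = κ²·u⁰, A⁰₀,(1+β) = A⁰_(1+β),0 = σκ·(P G⁻¹ e₀)_β for β = 0,1,2,3, and A⁰_(1+α),(1+β) = u⁰·Γ_{αβ}. Then A⁰ is positive definite. -/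

import Mathlib

/-!
The reflection form `Γ = G + 2 (Gu)(Gu)ᵀ` is positive definite: writing `w = z - G(u,w) u` with
`z` orthogonal to `u` gives `Γ(w,w) = G(u,w)² + G(z,z)`, and the orthogonal complement of a unit
timelike vector is spacelike (reverse Cauchy–Schwarz in Minkowski coordinates).
The mixed column `ζ = P G⁻¹ e₀` equals `G x` for `x = G⁻¹ e₀ + u⁰ u`, which is orthogonal to `u`;
there `Γ` agrees with `G`, so Cauchy–Schwarz for `Γ` gives
`(ζ ⬝ w)² ≤ G(x,x) Γ(w,w) = (g⁰⁰ + (u⁰)²) Γ(w,w) ≤ (u⁰)² Γ(w,w)`.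
With `p = κ V⁰` the quadratic form of `A⁰` is `u⁰ p² + 2σ p (ζ ⬝ w) + u⁰ Γ(w,w)`, which is
positive since `σ² < 1`.
-/

open Matrix

def projectionForm {ι : Type*} [Fintype ι] (G : Matrix ι ι ℝ) (u : ι → ℝ) : Matrix ι ι ℝ :=
  G + vecMulVec (G *ᵥ u) (G *ᵥ u)

def reflectionForm {ι : Type*} [Fintype ι] (G : Matrix ι ι ℝ) (u : ι → ℝ) : Matrix ι ι ℝ :=
  G + (2 : ℝ) • vecMulVec (G *ᵥ u) (G *ᵥ u)

def minkowskiMetric (n : ℕ) : Matrix (Fin (n + 1)) (Fin (n + 1)) ℝ :=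
  diagonal (Fin.cons (-1) 1)

section Bilinear

variable {ι R : Type*} [Fintype ι] [CommSemiring R]

theorem Matrix.IsSymm.dotProduct_mulVec_comm {G : Matrix ι ι R} (hG : G.IsSymm) (x y : ι → R) :
    x ⬝ᵥ G *ᵥ y = y ⬝ᵥ G *ᵥ x := by
  rw [dotProduct_mulVec, ← mulVec_transpose, hG.eq, dotProduct_comm]

theorem dotProduct_vecMulVec_mulVec (x a b y : ι → R) :
    x ⬝ᵥ vecMulVec a b *ᵥ y = (x ⬝ᵥ a) * (b ⬝ᵥ y) := by
  rw [vecMulVec_mulVec, op_smul_eq_smul, dotProduct_smul, smul_eq_mul, mul_comm]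

theorem dotProduct_mulVec_mulVec_eq_transpose_mul_mul (S G : Matrix ι ι R) (x y : ι → R) :
    (S *ᵥ x) ⬝ᵥ G *ᵥ (S *ᵥ y) = x ⬝ᵥ (Sᵀ * G * S) *ᵥ y := by
  rw [← mulVec_mulVec, ← mulVec_mulVec, dotProduct_mulVec x, vecMul_transpose]

end Bilinear

section Reflection

variable {ι : Type*} [Fintype ι] {G : Matrix ι ι ℝ} {u : ι → ℝ}

theorem dotProduct_reflectionForm_mulVec (hG : G.IsSymm) (x y : ι → ℝ) :
    x ⬝ᵥ reflectionForm G u *ᵥ y = x ⬝ᵥ G *ᵥ y + 2 * (u ⬝ᵥ G *ᵥ x) * (u ⬝ᵥ G *ᵥ y) := by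
  rw [reflectionForm, add_mulVec, smul_mulVec, dotProduct_add, dotProduct_smul,
    dotProduct_vecMulVec_mulVec, smul_eq_mul, hG.dotProduct_mulVec_comm x u,
    dotProduct_comm (G *ᵥ u) y, hG.dotProduct_mulVec_comm y u]
  ring

theorem reflectionForm_isSymm (hG : G.IsSymm) : (reflectionForm G u).IsSymm := by
  simp only [reflectionForm, IsSymm, transpose_add, transpose_smul, transpose_vecMulVec, hG.eq]

theorem reflectionForm_posDef (hG : G.IsSymm) (hu : u ⬝ᵥ G *ᵥ u = -1)
    (horth : ∀ w, u ⬝ᵥ G *ᵥ w = 0 → w ≠ 0 → 0 < w ⬝ᵥ G *ᵥ w) :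
    (reflectionForm G u).PosDef := by
  refine .of_dotProduct_mulVec_pos (reflectionForm_isSymm hG) fun w hw ↦ ?_
  rw [star_trivial, dotProduct_reflectionForm_mulVec hG]
  set c := u ⬝ᵥ G *ᵥ w
  set z := w + c • u
  have hz : u ⬝ᵥ G *ᵥ z = 0 := by
    simp only [z, mulVec_add, mulVec_smul, dotProduct_add, dotProduct_smul, hu, smul_eq_mul]
    ring
  have hzz : z ⬝ᵥ G *ᵥ z = w ⬝ᵥ G *ᵥ w + c ^ 2 := by
    simp only [z, mulVec_add, mulVec_smul, dotProduct_add, add_dotProduct, dotProduct_smul,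
      smul_dotProduct, hu, smul_eq_mul, hG.dotProduct_mulVec_comm w u]
    ring
  rcases eq_or_ne z 0 with hz0 | hz0
  · have hc : c ≠ 0 := by
      intro hc
      exact hw (by simpa [z, hc] using hz0)
    simp only [hz0, zero_dotProduct] at hzz
    nlinarith [sq_pos_of_ne_zero hc]
  · nlinarith [horth z hz hz0]

theorem sq_dotProduct_mulVec_le_of_orthogonal [DecidableEq ι] (hG : G.IsSymm)
    (hΓ : (reflectionForm G u).PosSemidef) {x : ι → ℝ} (hx : u ⬝ᵥ G *ᵥ x = 0) (w : ι → ℝ) :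
    (x ⬝ᵥ G *ᵥ w) ^ 2 ≤ (x ⬝ᵥ G *ᵥ x) * (w ⬝ᵥ reflectionForm G u *ᵥ w) := by
  have hCS := (toBilin' (reflectionForm G u)).apply_mul_apply_le_of_forall_zero_le
    (fun y ↦ by simpa [toBilin'_apply'] using hΓ.dotProduct_mulVec_nonneg y) x w
  rw [toBilin'_apply', toBilin'_apply', (reflectionForm_isSymm hG).dotProduct_mulVec_comm w x,
    ← sq] at hCS
  simpa [toBilin'_apply', dotProduct_reflectionForm_mulVec hG, hx] using hCS

end Reflection

section Projection

variable {ι : Type*} [Fintype ι] [DecidableEq ι] {G : Matrix ι ι ℝ} {u : ι → ℝ}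

theorem mulVec_dotProduct_inv_mulVec (hG : G.IsSymm) (hdet : IsUnit G.det) (u z : ι → ℝ) :
    (G *ᵥ u) ⬝ᵥ G⁻¹ *ᵥ z = u ⬝ᵥ z := by
  rw [dotProduct_mulVec, ← mulVec_transpose, transpose_nonsing_inv, hG.eq, mulVec_mulVec,
    nonsing_inv_mul G hdet, one_mulVec]

theorem projectionForm_mul_inv_mulVec (hG : G.IsSymm) (hdet : IsUnit G.det) (z : ι → ℝ) :
    (projectionForm G u * G⁻¹) *ᵥ z = G *ᵥ (G⁻¹ *ᵥ z + (u ⬝ᵥ z) • u) := by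
  rw [projectionForm, ← mulVec_mulVec, add_mulVec, vecMulVec_mulVec, op_smul_eq_smul,
    mulVec_dotProduct_inv_mulVec hG hdet, mulVec_add, mulVec_smul]

theorem sq_projectionForm_mul_inv_mulVec_dotProduct_le (hG : G.IsSymm) (hdet : IsUnit G.det)
    (hu : u ⬝ᵥ G *ᵥ u = -1) (hΓ : (reflectionForm G u).PosSemidef) (z w : ι → ℝ) :
    ((projectionForm G u * G⁻¹) *ᵥ z ⬝ᵥ w) ^ 2 ≤
      (z ⬝ᵥ G⁻¹ *ᵥ z + (u ⬝ᵥ z) ^ 2) * (w ⬝ᵥ reflectionForm G u *ᵥ w) := by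
  set x := G⁻¹ *ᵥ z + (u ⬝ᵥ z) • u
  have hGx : G *ᵥ x = z + (u ⬝ᵥ z) • (G *ᵥ u) := by
    rw [mulVec_add, mulVec_smul, mulVec_mulVec, mul_nonsing_inv G hdet, one_mulVec]
  have hx : u ⬝ᵥ G *ᵥ x = 0 := by
    rw [hGx, dotProduct_add, dotProduct_smul, hu, smul_eq_mul]
    ring
  have hxx : x ⬝ᵥ G *ᵥ x = z ⬝ᵥ G⁻¹ *ᵥ z + (u ⬝ᵥ z) ^ 2 := by
    rw [hGx]
    simp only [x, add_dotProduct, dotProduct_add, smul_dotProduct, dotProduct_smul, smul_eq_mul,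
      dotProduct_comm (G⁻¹ *ᵥ z), mulVec_dotProduct_inv_mulVec hG hdet, hu]
    ring
  rw [projectionForm_mul_inv_mulVec hG hdet, dotProduct_comm, ← hG.dotProduct_mulVec_comm,
    ← hxx]
  exact sq_dotProduct_mulVec_le_of_orthogonal hG hΓ hx w

end Projection

section Minkowski

variable {n : ℕ}

theorem dotProduct_minkowskiMetric_mulVec (x y : Fin (n + 1) → ℝ) :
    x ⬝ᵥ minkowskiMetric n *ᵥ y = -(x 0 * y 0) + Fin.tail x ⬝ᵥ Fin.tail y := by
  simp [minkowskiMetric, mulVec_diagonal, dotProduct, Fin.sum_univ_succ, Fin.tail]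

theorem dotProduct_minkowskiMetric_mulVec_self_pos_of_orthogonal {x y : Fin (n + 1) → ℝ}
    (hx : x ⬝ᵥ minkowskiMetric n *ᵥ x = -1) (hxy : x ⬝ᵥ minkowskiMetric n *ᵥ y = 0)
    (hy : y ≠ 0) : 0 < y ⬝ᵥ minkowskiMetric n *ᵥ y := by
  simp only [dotProduct_minkowskiMetric_mulVec] at *
  set X := Fin.tail x
  set Y := Fin.tail y
  have hCS : (X ⬝ᵥ Y) ^ 2 ≤ (X ⬝ᵥ X) * (Y ⬝ᵥ Y) := by
    simpa [dotProduct, sq] using Finset.sum_mul_sq_le_sq_mul_sq Finset.univ X Y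
  have hXX : 0 ≤ X ⬝ᵥ X := Finset.sum_nonneg fun i _ ↦ mul_self_nonneg (X i)
  have hYY : 0 ≤ Y ⬝ᵥ Y := Finset.sum_nonneg fun i _ ↦ mul_self_nonneg (Y i)
  have hx0 : 0 < x 0 ^ 2 := by nlinarith
  have key : Y ⬝ᵥ Y ≤ x 0 ^ 2 * (-(y 0 * y 0) + Y ⬝ᵥ Y) := by
    nlinarith [show x 0 ^ 2 * (-(y 0 * y 0) + Y ⬝ᵥ Y) - Y ⬝ᵥ Y = X ⬝ᵥ X * Y ⬝ᵥ Y - (X ⬝ᵥ Y) ^ 2 by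
      linear_combination (-(Y ⬝ᵥ Y)) * hx + (X ⬝ᵥ Y + x 0 * y 0) * hxy]
  rcases hYY.lt_or_eq with hY | hY
  · exact pos_of_mul_pos_right (hY.trans_le key) hx0.le
  · have hY0 : Y = 0 := dotProduct_self_eq_zero.mp hY.symm
    have hy0 : y 0 = 0 := by
      simp only [hY0, dotProduct_zero, add_zero, neg_eq_zero] at hxy
      exact (mul_eq_zero.mp hxy).resolve_left (by rintro h; simp [h] at hx0)
    exact absurd (funext fun i ↦ Fin.cases hy0 (congrFun hY0) i) hy

theorem dotProduct_mulVec_self_pos_of_orthogonal {G S : Matrix (Fin (n + 1)) (Fin (n + 1)) ℝ}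
    (hS : IsUnit S.det) (hSG : Sᵀ * G * S = minkowskiMetric n) {u w : Fin (n + 1) → ℝ}
    (hu : u ⬝ᵥ G *ᵥ u = -1) (huw : u ⬝ᵥ G *ᵥ w = 0) (hw : w ≠ 0) : 0 < w ⬝ᵥ G *ᵥ w := by
  have hsurj := mulVec_surjective_iff_isUnit.mpr ((isUnit_iff_isUnit_det S).mpr hS)
  obtain ⟨x, rfl⟩ := hsurj u
  obtain ⟨y, rfl⟩ := hsurj w
  simp only [dotProduct_mulVec_mulVec_eq_transpose_mul_mul, hSG] at *
  exact dotProduct_minkowskiMetric_mulVec_self_pos_of_orthogonal hu huw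
    (by rintro rfl; simp at hw)

end Minkowski

theorem dotProduct_mulVec_eq_block_fin_succ {R : Type*} [CommSemiring R] {n : ℕ}
    (A : Matrix (Fin (n + 1)) (Fin (n + 1)) R) (V : Fin (n + 1) → R) :
    V ⬝ᵥ A *ᵥ V = V 0 * A 0 0 * V 0 + V 0 * ((fun j ↦ A 0 j.succ) ⬝ᵥ Fin.tail V) +
      (Fin.tail V ⬝ᵥ fun i ↦ A i.succ 0) * V 0 +
      Fin.tail V ⬝ᵥ A.submatrix Fin.succ Fin.succ *ᵥ Fin.tail V := by
  simp only [dotProduct, mulVec, Fin.sum_univ_succ, Finset.mul_sum, Finset.sum_mul,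
    Finset.sum_add_distrib, Fin.tail, submatrix_apply, mul_add, mul_assoc]
  ring

theorem quadratic_pos_of_sq_le {c σ p s q : ℝ} (hc : 0 < c) (hσ : σ ^ 2 < 1)
    (hs : s ^ 2 ≤ c ^ 2 * q) (hpq : p ≠ 0 ∨ 0 < q) :
    0 < c * p ^ 2 + 2 * σ * p * s + c * q := by
  have hq : 0 ≤ q := nonneg_of_mul_nonneg_right (le_trans (sq_nonneg s) hs) (by positivity)
  -- `c * (c p² + 2σps + cq) = (cp + σs)² + (c²q - σ²s²)` and `σ²s² ≤ σ²c²q`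
  have hsq : σ ^ 2 * s ^ 2 ≤ σ ^ 2 * (c ^ 2 * q) := mul_le_mul_of_nonneg_left hs (sq_nonneg σ)
  rcases hq.lt_or_eq with hq' | rfl
  · refine pos_of_mul_pos_right (a := c) ?_ hc.le
    nlinarith [sq_nonneg (c * p + σ * s), mul_pos (mul_pos hc hc) hq']
  · obtain rfl : s = 0 := pow_eq_zero_iff two_ne_zero |>.mp (by simpa using hs)
    simpa using mul_pos hc (sq_pos_of_ne_zero (hpq.resolve_right (lt_irrefl 0)))

/-- The coefficient matrix `A⁰ = t_ν A^ν` (with `t = (1,0,0,0)`) of the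
symmetric-hyperbolic form of the relativistic Euler equations is positive
definite, for a Lorentzian metric `G` with `(G⁻¹)₀₀ < 0`, a future-directed
unit timelike vector `u` (`uᵀGu = -1`, `u⁰ > 0`), `κ ≠ 0` and sound speed
`σ` with `σ² < 1`. -/
theorem stmt6 (G : Matrix (Fin 4) (Fin 4) ℝ) (hG : G.IsSymm)
    (hLor : ∃ S : Matrix (Fin 4) (Fin 4) ℝ,
      IsUnit S.det ∧ Sᵀ * G * S = Matrix.diagonal ![(-1 : ℝ), 1, 1, 1])
    (hGinv : IsUnit G.det) (hG00 : G⁻¹ 0 0 < 0)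
    (u : Fin 4 → ℝ) (hu : u ⬝ᵥ G.mulVec u = -1) (hu0 : 0 < u 0)
    (κ σ : ℝ) (hκ : κ ≠ 0) (hσ : σ ^ 2 < 1)
    (A0 : Matrix (Fin 5) (Fin 5) ℝ)
    (hA00 : A0 0 0 = κ ^ 2 * u 0)
    (hA0r : ∀ β : Fin 4,
      A0 0 β.succ =
        σ * κ * ((G + vecMulVec (G.mulVec u) (G.mulVec u)) * G⁻¹).mulVec
          (Pi.single 0 1 : Fin 4 → ℝ) β)
    (hAc0 : ∀ β : Fin 4,
      A0 β.succ 0 =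
        σ * κ * ((G + vecMulVec (G.mulVec u) (G.mulVec u)) * G⁻¹).mulVec
          (Pi.single 0 1 : Fin 4 → ℝ) β)
    (hArc : ∀ α β : Fin 4,
      A0 α.succ β.succ =
        u 0 * (G + (2 : ℝ) • vecMulVec (G.mulVec u) (G.mulVec u)) α β) :
    ∀ V : Fin 5 → ℝ, V ≠ 0 → 0 < V ⬝ᵥ A0.mulVec V := by
  intro V hV
  set ζ := (projectionForm G u * G⁻¹) *ᵥ Pi.single 0 1
  set w := Fin.tail V
  have hΓ : (reflectionForm G u).PosDef := by
    obtain ⟨S, hS, hSG⟩ := hLor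
    have hη : Sᵀ * G * S = minkowskiMetric 3 := by
      rw [hSG, minkowskiMetric]
      congr 1
      ext i
      fin_cases i <;> rfl
    exact reflectionForm_posDef hG hu fun w huw hw ↦
      dotProduct_mulVec_self_pos_of_orthogonal hS hη hu huw hw
  have hζ : (ζ ⬝ᵥ w) ^ 2 ≤ u 0 ^ 2 * (w ⬝ᵥ reflectionForm G u *ᵥ w) := by
    have h := sq_projectionForm_mul_inv_mulVec_dotProduct_le hG hGinv hu hΓ.posSemidef
      (Pi.single 0 1) w
    have hΓw : 0 ≤ w ⬝ᵥ reflectionForm G u *ᵥ w := by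
      simpa using hΓ.posSemidef.dotProduct_mulVec_nonneg w
    have he₀ : Pi.single 0 1 ⬝ᵥ G⁻¹ *ᵥ Pi.single 0 1 = G⁻¹ 0 0 := by simp
    rw [he₀, dotProduct_single, mul_one] at h
    exact h.trans (mul_le_mul_of_nonneg_right (by linarith) hΓw)
  have hA : V ⬝ᵥ A0 *ᵥ V = u 0 * (κ * V 0) ^ 2 + 2 * σ * (κ * V 0) * (ζ ⬝ᵥ w) +
      u 0 * (w ⬝ᵥ reflectionForm G u *ᵥ w) := by
    have hrow : (fun j ↦ A0 0 j.succ) = (σ * κ) • ζ := funext hA0r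
    have hcol : (fun i ↦ A0 i.succ 0) = (σ * κ) • ζ := funext hAc0
    have hsub : A0.submatrix Fin.succ Fin.succ = u 0 • reflectionForm G u := Matrix.ext hArc
    rw [dotProduct_mulVec_eq_block_fin_succ, hrow, hcol, hsub, hA00, smul_mulVec,
      dotProduct_smul, dotProduct_smul, smul_dotProduct, dotProduct_comm w ζ]
    simp only [smul_eq_mul, w]
    ring
  rw [hA]
  refine quadratic_pos_of_sq_le hu0 hσ hζ ?_
  by_cases hw : w = 0
  · refine .inl (mul_ne_zero hκ fun hV0 ↦ hV ?_)
    exact funext fun i ↦ Fin.cases hV0 (congrFun hw) i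
  · simpa using Or.inr (hΓ.dotProduct_mulVec_pos hw)
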